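/- arXiv:1409.0331 — 2 statements merged into one kernel-verified Lean document; each statement's English description precedes it below -/
import Mathlib

section
/- For Re(s) > 0, Re(ν) > -1, and a > 0, ∫_0^∞ e^{-sx} x^{ν/2} J_ν(2√(ax)) dx = e^{-a/s} a^{ν/2} s^{-ν-1}, where J_ν is the Bessel function of the first kind. -/
open Complex MeasureTheory

/-- The Bessel function of the first kind of order `ν`, defined by its power series. -/
noncomputable def besselJ (ν : ℂ) (z : ℂ) : ℂ :=
  ∑' k : ℕ, (-1) ^ k * (z / 2) ^ (ν + 2 * k) / ((k.factorial : ℂ) * Complex.Gamma (ν + k + 1))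

/-!
Expanding `J_ν(2√(ax)) = ∑ₖ (-1)ᵏ (ax)^(ν/2+k) / (k! Γ(ν+k+1))` and integrating term by term
against `e^(-sx) x^(ν/2)` with `∫₀^∞ t^w e^(-zt) dt = Γ(w+1) z^(-w-1)` leaves
`a^(ν/2) s^(-ν-1) ∑ₖ (-a/s)ᵏ / k! = a^(ν/2) s^(-ν-1) e^(-a/s)`.
The Laplace integral is classical for real `z > 0` and extends to `Re z > 0` by analytic
continuation. Term-by-term integration is justified by
`Γ(Re ν+k+1) |Γ(ν+1)| ≤ Γ(Re ν+1) |Γ(ν+k+1)|`, which bounds the integral of the `k`-th term's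
absolute value by a multiple of `(a / Re s)ᵏ / k!`.
-/

open Set Filter Topology

lemma DifferentiableOn.eqOn_re_pos_of_ofReal_eq {E : Type*} [NormedAddCommGroup E]
    [NormedSpace ℂ E] [CompleteSpace E] {f g : ℂ → E}
    (hf : DifferentiableOn ℂ f {z | 0 < z.re}) (hg : DifferentiableOn ℂ g {z | 0 < z.re})
    (h : ∀ x : ℝ, 0 < x → f x = g x) : EqOn f g {z | 0 < z.re} := by
  have hopen : IsOpen {z : ℂ | 0 < z.re} := isOpen_lt continuous_const continuous_re
  refine (hf.analyticOnNhd hopen).eqOn_of_preconnected_of_frequently_eq (hg.analyticOnNhd hopen)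
    (convex_halfSpace_re_gt 0).isPreconnected (z₀ := 1) (by simp) ?_
  have hreal : Tendsto ((↑) : ℝ → ℂ) (𝓝[≠] 1) (𝓝[≠] 1) :=
    continuous_ofReal.continuousWithinAt.tendsto_nhdsWithin fun x hx => by simpa using hx
  refine hreal.frequently (Eventually.frequently ?_)
  filter_upwards [eventually_nhdsWithin_of_eventually_nhds (eventually_gt_nhds one_pos)] with x hx
  exact h x hx

section Laplace

variable {w z : ℂ}

lemma norm_cpow_mul_cexp_neg_mul {t : ℝ} (ht : 0 < t) :
    ‖(t : ℂ) ^ w * cexp (-z * t)‖ = t ^ w.re * Real.exp (-(z.re * t)) := by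
  rw [norm_mul, norm_cpow_eq_rpow_re_of_pos ht, norm_exp]
  simp

lemma integrableOn_cpow_mul_cexp_neg_mul (hw : -1 < w.re) (hz : 0 < z.re) :
    IntegrableOn (fun t : ℝ => (t : ℂ) ^ w * cexp (-z * t)) (Ioi 0) := by
  have hmeas : AEStronglyMeasurable (fun t : ℝ => (t : ℂ) ^ w * cexp (-z * t))
      (volume.restrict (Ioi 0)) := by
    fun_prop
  have hnorm : IntegrableOn (fun t : ℝ => t ^ w.re * Real.exp (-(z.re * t))) (Ioi 0) := by
    simpa using integrableOn_rpow_mul_exp_neg_mul_rpow hw one_pos hz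
  refine (integrable_norm_iff hmeas).mp (hnorm.congr_fun (fun t ht => ?_) measurableSet_Ioi)
  exact (norm_cpow_mul_cexp_neg_mul ht).symm

lemma integral_norm_cpow_mul_cexp_neg_mul (hw : -1 < w.re) (hz : 0 < z.re) :
    ∫ t in Ioi (0 : ℝ), ‖(t : ℂ) ^ w * cexp (-z * t)‖
      = Real.Gamma (w.re + 1) * (1 / z.re) ^ (w.re + 1) := by
  rw [setIntegral_congr_fun measurableSet_Ioi fun t ht => norm_cpow_mul_cexp_neg_mul ht,
    mul_comm]
  simpa using Real.integral_rpow_mul_exp_neg_mul_Ioi (by linarith : 0 < w.re + 1) hz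

lemma hasDerivAt_cpow_mul_cexp_neg_mul {t : ℝ} (ht : t ≠ 0) (z : ℂ) :
    HasDerivAt (fun z : ℂ => (t : ℂ) ^ w * cexp (-z * t))
      (-((t : ℂ) ^ (w + 1) * cexp (-z * t))) z := by
  refine ((((hasDerivAt_neg z).mul_const (t : ℂ)).cexp).const_mul ((t : ℂ) ^ w)).congr_deriv ?_
  rw [cpow_add _ _ (ofReal_ne_zero.mpr ht), cpow_one]
  ring

lemma differentiableOn_integral_cpow_mul_cexp_neg_mul (hw : -1 < w.re) :
    DifferentiableOn ℂ (fun z : ℂ => ∫ t in Ioi (0 : ℝ), (t : ℂ) ^ w * cexp (-z * t))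
      {z | 0 < z.re} := by
  intro z₀ (hz₀ : 0 < z₀.re)
  have hnhds : {z : ℂ | z₀.re / 2 < z.re} ∈ 𝓝 z₀ :=
    (isOpen_lt continuous_const continuous_re).mem_nhds
      (show z₀.re / 2 < z₀.re from half_lt_self hz₀)
  have hw' : -1 < (w + 1).re := by simp; linarith
  -- dominates the `z`-derivatives on the half-plane `Re z > Re z₀ / 2`
  have hbound := (integrableOn_cpow_mul_cexp_neg_mul hw' (z := ((z₀.re / 2 : ℝ) : ℂ))
    (by simpa using half_pos hz₀)).norm
  refine (hasDerivAt_integral_of_dominated_loc_of_deriv_le (μ := volume.restrict (Ioi 0))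
    (F := fun z (t : ℝ) => (t : ℂ) ^ w * cexp (-z * t))
    (F' := fun z (t : ℝ) => -((t : ℂ) ^ (w + 1) * cexp (-z * t))) hnhds
    (.of_forall fun z => by fun_prop) (integrableOn_cpow_mul_cexp_neg_mul hw hz₀) (by fun_prop)
    ?_ hbound ?_).2.differentiableAt.differentiableWithinAt
  · filter_upwards [ae_restrict_mem measurableSet_Ioi] with t (ht : 0 < t) z (hz : _ < z.re)
    rw [norm_neg, norm_cpow_mul_cexp_neg_mul ht, norm_cpow_mul_cexp_neg_mul ht, ofReal_re]
    gcongr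
  · filter_upwards [ae_restrict_mem measurableSet_Ioi] with t (ht : 0 < t) z _
    exact hasDerivAt_cpow_mul_cexp_neg_mul ht.ne' z

theorem integral_cpow_mul_cexp_neg_mul_Ioi (hw : -1 < w.re) (hz : 0 < z.re) :
    ∫ t in Ioi (0 : ℝ), (t : ℂ) ^ w * cexp (-z * t) = Gamma (w + 1) * z ^ (-(w + 1)) := by
  have hrhs : DifferentiableOn ℂ (fun z : ℂ => Gamma (w + 1) * z ^ (-(w + 1))) {z | 0 < z.re} :=
    fun u hu => ((differentiableAt_id.cpow_const (mem_slitPlane_iff.2 (Or.inl hu))).const_mul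
      _).differentiableWithinAt
  refine (differentiableOn_integral_cpow_mul_cexp_neg_mul hw).eqOn_re_pos_of_ofReal_eq hrhs
    (fun r hr => ?_) hz
  have hreal := integral_cpow_mul_exp_neg_mul_Ioi (a := w + 1) (by simp; linarith) hr
  rw [add_sub_cancel_right] at hreal
  simp only [neg_mul]
  rw [hreal, one_div, inv_cpow_ofReal_nonneg hr.le, cpow_neg, mul_comm]

end Laplace

lemma Gamma_re_add_nat_mul_norm_Gamma_le {z : ℂ} (hz : 0 < z.re) (k : ℕ) :
    Real.Gamma (z.re + k) * ‖Gamma z‖ ≤ Real.Gamma z.re * ‖Gamma (z + k)‖ := by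
  induction k with
  | zero => simp
  | succ k ih =>
    have hpos : 0 < z.re + k := by positivity
    have hre : z.re + k ≤ ‖z + k‖ := by
      simpa using re_le_norm (z + k)
    push_cast
    rw [← add_assoc, ← add_assoc, Real.Gamma_add_one hpos.ne',
      Gamma_add_one _ (fun h => hpos.ne' (by simpa using congrArg re h)), norm_mul]
    calc (z.re + k) * Real.Gamma (z.re + k) * ‖Gamma z‖
        ≤ ‖z + k‖ * (Real.Gamma z.re * ‖Gamma (z + k)‖) := by
          rw [mul_assoc]; gcongr
      _ = Real.Gamma z.re * (‖z + k‖ * ‖Gamma (z + k)‖) := by ring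

noncomputable def besselCoeff (ν : ℂ) (k : ℕ) : ℂ := (-1) ^ k / (k.factorial * Gamma (ν + k + 1))

lemma norm_besselCoeff_mul_Gamma_le {ν : ℂ} (hν : -1 < ν.re) (k : ℕ) :
    ‖besselCoeff ν k‖ * Real.Gamma (ν.re + k + 1)
      ≤ Real.Gamma (ν.re + 1) / ‖Gamma (ν + 1)‖ / k.factorial := by
  have h := Gamma_re_add_nat_mul_norm_Gamma_le (z := ν + 1) (by simp; linarith) k
  have hΓ : 0 < ‖Gamma (ν + 1)‖ :=
    norm_pos_iff.2 (Gamma_ne_zero_of_re_pos (by simp; linarith))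
  have hΓk : 0 < ‖Gamma (ν + k + 1)‖ :=
    norm_pos_iff.2 (Gamma_ne_zero_of_re_pos (by simp; linarith))
  simp only [add_re, one_re, add_right_comm ν 1, add_right_comm ν.re 1] at h
  simp only [besselCoeff, norm_div, norm_mul, norm_pow, norm_neg, norm_one, one_pow,
    norm_natCast]
  rw [div_mul_eq_mul_div, one_mul, div_le_div_iff₀ (by positivity) (by positivity)]
  calc Real.Gamma (ν.re + k + 1) * k.factorial
      ≤ Real.Gamma (ν.re + 1) * ‖Gamma (ν + k + 1)‖ / ‖Gamma (ν + 1)‖ * k.factorial := by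
        gcongr
        rwa [le_div_iff₀ hΓ]
    _ = _ := by ring

lemma ofReal_sqrt_cpow {y : ℝ} (hy : 0 ≤ y) (w : ℂ) : ((√y : ℝ) : ℂ) ^ w = (y : ℂ) ^ (w / 2) := by
  rw [Real.sqrt_eq_rpow, ← cpow_mul_ofReal_nonneg hy]
  congr 1
  push_cast
  ring

lemma besselJ_two_mul_sqrt {y : ℝ} (hy : 0 ≤ y) (ν : ℂ) :
    besselJ ν (2 * √y) = ∑' k : ℕ, besselCoeff ν k * (y : ℂ) ^ (ν / 2 + k) := by
  refine tsum_congr fun k => ?_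
  rw [mul_div_cancel_left₀ _ two_ne_zero, ofReal_sqrt_cpow hy, add_div,
    mul_div_cancel_left₀ _ two_ne_zero, besselCoeff]
  ring

section LaplaceBesselTerm

variable {ν s : ℂ} {a : ℝ}

noncomputable def laplaceBesselTerm (ν s : ℂ) (a : ℝ) (k : ℕ) (x : ℝ) : ℂ :=
  besselCoeff ν k * (a : ℂ) ^ (ν / 2 + k) * ((x : ℂ) ^ (ν + k) * cexp (-s * x))

lemma integrand_eq_tsum_laplaceBesselTerm (ha : 0 ≤ a) {x : ℝ} (hx : 0 < x) :
    cexp (-s * x) * (x : ℂ) ^ (ν / 2) * besselJ ν (2 * √(a * x))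
      = ∑' k, laplaceBesselTerm ν s a k x := by
  rw [besselJ_two_mul_sqrt (by positivity), ← tsum_mul_left]
  refine tsum_congr fun k => ?_
  have hpow : (x : ℂ) ^ (ν / 2) * (x : ℂ) ^ (ν / 2 + k) = (x : ℂ) ^ (ν + k) := by
    rw [← cpow_add _ _ (ofReal_ne_zero.2 hx.ne')]
    ring_nf
  rw [laplaceBesselTerm, ofReal_mul, mul_cpow_ofReal_nonneg ha hx.le, ← hpow]
  ring

lemma integrableOn_laplaceBesselTerm (hν : -1 < ν.re) (hs : 0 < s.re) (k : ℕ) :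
    IntegrableOn (laplaceBesselTerm ν s a k) (Ioi 0) :=
  (integrableOn_cpow_mul_cexp_neg_mul (by simp; linarith) hs).const_mul _

lemma integral_laplaceBesselTerm (ha : 0 < a) (hν : -1 < ν.re) (hs : 0 < s.re) (k : ℕ) :
    ∫ x in Ioi (0 : ℝ), laplaceBesselTerm ν s a k x
      = (a : ℂ) ^ (ν / 2) * s ^ (-ν - 1) * ((-a / s) ^ k / k.factorial) := by
  have hs0 : s ≠ 0 := fun h => by simp [h] at hs
  have hΓ : Gamma (ν + k + 1) ≠ 0 := Gamma_ne_zero_of_re_pos (by simp; linarith)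
  simp only [laplaceBesselTerm]
  rw [integral_const_mul, integral_cpow_mul_cexp_neg_mul_Ioi (by simp; linarith) hs, besselCoeff,
    cpow_add _ _ (ofReal_ne_zero.2 ha.ne'), cpow_natCast,
    show -(ν + k + 1) = (-ν - 1) + -(k : ℂ) by ring, cpow_add _ _ hs0, cpow_neg, cpow_natCast,
    div_pow, neg_pow (a : ℂ)]
  field_simp

lemma integral_norm_laplaceBesselTerm (ha : 0 < a) (hν : -1 < ν.re) (hs : 0 < s.re) (k : ℕ) :
    ∫ x in Ioi (0 : ℝ), ‖laplaceBesselTerm ν s a k x‖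
      = ‖besselCoeff ν k‖ * a ^ (ν.re / 2 + k)
        * (Real.Gamma (ν.re + k + 1) * (1 / s.re) ^ (ν.re + k + 1)) := by
  simp_rw [laplaceBesselTerm, norm_mul (_ * _ : ℂ) ((_ : ℂ) ^ (ν + k) * _)]
  rw [integral_const_mul, norm_mul, integral_norm_cpow_mul_cexp_neg_mul (by simp; linarith) hs,
    norm_cpow_eq_rpow_re_of_pos ha]
  simp

lemma summable_integral_norm_laplaceBesselTerm (ha : 0 < a) (hν : -1 < ν.re) (hs : 0 < s.re) :
    Summable fun k => ∫ x in Ioi (0 : ℝ), ‖laplaceBesselTerm ν s a k x‖ := by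
  set C := Real.Gamma (ν.re + 1) / ‖Gamma (ν + 1)‖ * (a ^ (ν.re / 2) * (1 / s.re) ^ (ν.re + 1))
  refine Summable.of_nonneg_of_le (fun k => integral_nonneg fun _ => norm_nonneg _) (fun k => ?_)
    ((Real.summable_pow_div_factorial (a / s.re)).mul_left C)
  have hsplit : a ^ (ν.re / 2 + k) * (1 / s.re) ^ (ν.re + k + 1)
      = a ^ (ν.re / 2) * (1 / s.re) ^ (ν.re + 1) * (a / s.re) ^ k := by
    rw [Real.rpow_add ha, add_right_comm, Real.rpow_add (by positivity), Real.rpow_natCast,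
      Real.rpow_natCast, div_eq_mul_one_div a, mul_pow]
    ring
  calc ∫ x in Ioi (0 : ℝ), ‖laplaceBesselTerm ν s a k x‖
      = ‖besselCoeff ν k‖ * Real.Gamma (ν.re + k + 1)
          * (a ^ (ν.re / 2) * (1 / s.re) ^ (ν.re + 1) * (a / s.re) ^ k) := by
        rw [integral_norm_laplaceBesselTerm ha hν hs, ← hsplit]
        ring
    _ ≤ Real.Gamma (ν.re + 1) / ‖Gamma (ν + 1)‖ / k.factorial
          * (a ^ (ν.re / 2) * (1 / s.re) ^ (ν.re + 1) * (a / s.re) ^ k) := by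
        gcongr
        exact norm_besselCoeff_mul_Gamma_le hν k
    _ = C * ((a / s.re) ^ k / k.factorial) := by
        ring

end LaplaceBesselTerm

/-- `∫_0^∞ e^{-sx} x^{ν/2} J_ν(2√(ax)) dx = e^{-a/s} a^{ν/2} s^{-ν-1}`
for `Re s > 0`, `Re ν > -1`, `a > 0`. -/
theorem laplace_besselJ (s ν : ℂ) (a : ℝ) (hs : 0 < s.re) (hν : -1 < ν.re) (ha : 0 < a) :
    ∫ x in Set.Ioi (0 : ℝ),
        Complex.exp (-s * x) * (x : ℂ) ^ (ν / 2) * besselJ ν (2 * Real.sqrt (a * x))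
      = Complex.exp (-(a : ℂ) / s) * (a : ℂ) ^ (ν / 2) * s ^ (-ν - 1) := by
  have hsum := hasSum_integral_of_summable_integral_norm
    (integrableOn_laplaceBesselTerm hν hs) (summable_integral_norm_laplaceBesselTerm ha hν hs)
  rw [setIntegral_congr_fun measurableSet_Ioi fun x hx =>
    integrand_eq_tsum_laplaceBesselTerm ha.le hx]
  refine hsum.unique ?_
  rw [funext (integral_laplaceBesselTerm ha hν hs)]
  have hexp := NormedSpace.expSeries_div_hasSum_exp (-(a : ℂ) / s)
  rw [← exp_eq_exp_ℂ] at hexp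
  rw [mul_rotate]
  exact hexp.mul_left _
end

section
/- For Re(s) > 0, the Laplace transform of the circle-problem error term satisfies ∫_0^∞ e^{-sx} P(x) dx = π s^{-2} ∑_{n=1}^∞ r(n) e^{-π² n / s} (for real s > 0), where P(x) = ∑'_{n≤x} r(n) - πx + 1 and r(n) is the number of representations of n as a sum of two integer squares. -/
open Real MeasureTheory

/-- `r(n)`: the number of representations of `n` as an ordered sum of two integer squares. -/
noncomputable def sumTwoSquares (n : ℕ) : ℕ :=
  Nat.card {p : ℤ × ℤ // p.1 ^ 2 + p.2 ^ 2 = (n : ℤ)}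

/-- The error term in the Gauss circle problem. -/
noncomputable def circleError (x : ℝ) : ℝ :=
  (∑ n ∈ Finset.Icc 1 ⌊x⌋₊, (sumTwoSquares n : ℝ)) - π * x + 1

/-!
Writing `P(x)` as a sum of the step functions `r(n) 1_{[n,∞)}` plus `1 - πx`, its Laplace transform
is `(Θ(s)² - 1)/s + 1/s - π/s²`, where `Θ(c) = ∑_{k∈ℤ} e^{-ck²}` and `Θ(c)² = ∑_n r(n) e^{-cn}`.
The theta transformation `Θ(s)² = (π/s) Θ(π²/s)²` (Poisson summation) turns this into
`(π/s²)(Θ(π²/s)² - 1)`.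
-/

open Set Filter

section IntegrableTsum

variable {α E : Type*} [MeasurableSpace α] {μ : Measure α} [NormedAddCommGroup E]

theorem integrable_of_hasSum_of_summable_integral_norm {ι : Type*} [Countable ι]
    {F : ι → α → E} {G : α → E} (hG : AEStronglyMeasurable G μ)
    (hFG : ∀ᵐ x ∂μ, HasSum (F · x) (G x)) (hF : ∀ i, Integrable (F i) μ)
    (hsum : Summable fun i ↦ ∫ x, ‖F i x‖ ∂μ) : Integrable G μ := by
  refine ⟨hG, ?_⟩
  calc ∫⁻ x, ‖G x‖ₑ ∂μ ≤ ∫⁻ x, ∑' i, ‖F i x‖ₑ ∂μ :=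
        lintegral_mono_ae <| hFG.mono fun x hx ↦ hx.tsum_eq ▸ enorm_tsum_le_tsum_enorm
    _ = ∑' i, ENNReal.ofReal (∫ x, ‖F i x‖ ∂μ) := by
        rw [lintegral_tsum fun i ↦ (hF i).1.enorm]
        simp_rw [ofReal_integral_norm_eq_lintegral_enorm (hF _)]
    _ = ENNReal.ofReal (∑' i, ∫ x, ‖F i x‖ ∂μ) :=
        (ENNReal.ofReal_tsum_of_nonneg (fun i ↦ integral_nonneg fun _ ↦ norm_nonneg _) hsum).symm
    _ < ⊤ := ENNReal.ofReal_lt_top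

end IntegrableTsum

section LaplaceIntegrals

variable {s : ℝ}

theorem integral_exp_neg_mul_Ioi (hs : 0 < s) (c : ℝ) :
    ∫ x in Ioi c, exp (-s * x) = exp (-s * c) / s := by
  rw [integral_exp_mul_Ioi (neg_lt_zero.mpr hs), neg_div_neg_eq]

theorem integrableOn_mul_exp_neg_mul_Ioi (hs : 0 < s) :
    IntegrableOn (fun x ↦ x * exp (-s * x)) (Ioi 0) := by
  simpa using integrableOn_rpow_mul_exp_neg_mul_rpow (s := 1) (p := 1) (by norm_num) one_pos hs

theorem integral_mul_exp_neg_mul_Ioi (hs : 0 < s) :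
    ∫ x in Ioi 0, x * exp (-s * x) = 1 / s ^ 2 := by
  have h := integral_rpow_mul_exp_neg_mul_rpow (q := 1) (p := 1) one_pos (by norm_num) hs
  norm_num [Gamma_two] at h
  simpa [neg_mul, one_div] using h

theorem integrableOn_exp_neg_mul_mul_one_sub_Ioi (hs : 0 < s) (b : ℝ) :
    IntegrableOn (fun x ↦ exp (-s * x) * (1 - b * x)) (Ioi 0) := by
  refine ((exp_neg_integrableOn_Ioi 0 hs).sub ((integrableOn_mul_exp_neg_mul_Ioi hs).const_mul b)
    ).congr_fun (fun x _ ↦ ?_) measurableSet_Ioi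
  simp only [Pi.sub_apply]
  ring

theorem integral_exp_neg_mul_mul_one_sub_Ioi (hs : 0 < s) (b : ℝ) :
    ∫ x in Ioi 0, exp (-s * x) * (1 - b * x) = 1 / s - b / s ^ 2 := by
  have hsplit (x : ℝ) : exp (-s * x) * (1 - b * x) = exp (-s * x) - b * (x * exp (-s * x)) := by
    ring
  simp_rw [hsplit]
  rw [integral_sub (exp_neg_integrableOn_Ioi 0 hs)
      ((integrableOn_mul_exp_neg_mul_Ioi hs).const_mul b),
    integral_const_mul, integral_mul_exp_neg_mul_Ioi hs, integral_exp_neg_mul_Ioi hs]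
  simp only [mul_zero, exp_zero]
  ring

theorem integral_Ioi_indicator_Ici_exp (hs : 0 < s) {c : ℝ} (hc : 0 < c) (b : ℝ) :
    ∫ x in Ioi 0, (Ici c).indicator (fun y ↦ b * exp (-s * y)) x = b * exp (-s * c) / s := by
  rw [integral_indicator measurableSet_Ici, Measure.restrict_restrict measurableSet_Ici,
    inter_eq_self_of_subset_left (Ici_subset_Ioi.mpr hc), integral_Ici_eq_integral_Ioi,
    integral_const_mul, integral_exp_neg_mul_Ioi hs, mul_div_assoc]

theorem integrableOn_indicator_Ici_exp (hs : 0 < s) (c b : ℝ) :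
    IntegrableOn ((Ici c).indicator fun y ↦ b * exp (-s * y)) (Ioi 0) :=
  Integrable.indicator ((exp_neg_integrableOn_Ioi 0 hs).const_mul b) measurableSet_Ici

end LaplaceIntegrals

section StepFunctions

variable {a : ℕ → ℝ} {s : ℝ}

theorem hasSum_indicator_Ici_exp_mul {x : ℝ} (hx : 0 ≤ x) :
    HasSum (fun n : ℕ ↦ (Ici ((n : ℝ) + 1)).indicator (fun y ↦ a (n + 1) * exp (-s * y)) x)
      (exp (-s * x) * ∑ n ∈ Finset.Icc 1 ⌊x⌋₊, a n) := by
  have hmem (n : ℕ) : x ∈ Ici ((n : ℝ) + 1) ↔ n ∈ Finset.range ⌊x⌋₊ := by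
    rw [mem_Ici, Finset.mem_range, Nat.lt_iff_add_one_le, Nat.le_floor_iff hx]
    push_cast; rfl
  have hsum : ∑ n ∈ Finset.Icc 1 ⌊x⌋₊, a n = ∑ n ∈ Finset.range ⌊x⌋₊, a (n + 1) := by
    rw [Finset.range_eq_Ico, Finset.sum_Ico_add' a 0 ⌊x⌋₊ 1]; rfl
  have h := hasSum_sum_of_ne_finset_zero (L := .unconditional ℕ) (s := Finset.range ⌊x⌋₊)
    (f := fun n : ℕ ↦ (Ici ((n : ℝ) + 1)).indicator (fun y ↦ a (n + 1) * exp (-s * y)) x)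
    fun n hn ↦ indicator_of_notMem (mt (hmem n).mp hn) _
  convert h using 1
  rw [hsum, Finset.mul_sum]
  refine Finset.sum_congr rfl fun n hn ↦ ?_
  rw [indicator_of_mem ((hmem n).mpr hn), mul_comm]

theorem summable_integral_norm_indicator_Ici_exp (hs : 0 < s)
    (ha : Summable fun n ↦ |a n| * exp (-s * n)) :
    Summable fun n : ℕ ↦
      ∫ x in Ioi 0, ‖(Ici ((n : ℝ) + 1)).indicator (fun y ↦ a (n + 1) * exp (-s * y)) x‖ := by
  have hshift := ((summable_nat_add_iff 1).mpr ha).div_const s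
  refine hshift.congr fun n ↦ ?_
  simp_rw [norm_indicator_eq_indicator_norm, norm_mul, norm_eq_abs, abs_exp]
  rw [integral_Ioi_indicator_Ici_exp hs (by positivity)]
  push_cast; rfl

theorem integrableOn_exp_mul_sum_Icc_floor (hs : 0 < s)
    (ha : Summable fun n ↦ |a n| * exp (-s * n)) :
    IntegrableOn (fun x ↦ exp (-s * x) * ∑ n ∈ Finset.Icc 1 ⌊x⌋₊, a n) (Ioi 0) := by
  refine integrable_of_hasSum_of_summable_integral_norm ?_
    ((ae_restrict_iff' measurableSet_Ioi).mpr <| Eventually.of_forall fun x hx ↦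
      hasSum_indicator_Ici_exp_mul (le_of_lt hx))
    (fun n ↦ integrableOn_indicator_Ici_exp hs _ _)
    (summable_integral_norm_indicator_Ici_exp hs ha)
  exact Measurable.aestronglyMeasurable <| Measurable.mul (by fun_prop)
    ((measurable_from_nat (f := fun k ↦ ∑ n ∈ Finset.Icc 1 k, a n)).comp Nat.measurable_floor)

theorem hasSum_integral_exp_mul_sum_Icc_floor (hs : 0 < s)
    (ha : Summable fun n ↦ |a n| * exp (-s * n)) :
    HasSum (fun n : ℕ ↦ a (n + 1) * exp (-s * (n + 1)) / s)
      (∫ x in Ioi 0, exp (-s * x) * ∑ n ∈ Finset.Icc 1 ⌊x⌋₊, a n) := by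
  have h := hasSum_integral_of_summable_integral_norm
    (fun n ↦ integrableOn_indicator_Ici_exp hs _ _)
    (summable_integral_norm_indicator_Ici_exp hs ha)
  have hterm (n : ℕ) := integral_Ioi_indicator_Ici_exp hs (c := n + 1) (by positivity) (a (n + 1))
  simp only [hterm] at h
  rwa [setIntegral_congr_fun measurableSet_Ioi fun x hx ↦
    (hasSum_indicator_Ici_exp_mul (le_of_lt hx)).tsum_eq] at h

end StepFunctions

theorem summable_exp_neg_mul_int_sq {c : ℝ} (hc : 0 < c) :
    Summable fun k : ℤ ↦ exp (-c * k ^ 2) := by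
  refine (summable_pow_mul_jacobiTheta₂_term_bound 0 (div_pos hc pi_pos) 0).congr fun k ↦ ?_
  field_simp
  simp

theorem sumTwoSquares_zero : sumTwoSquares 0 = 1 := by
  rw [sumTwoSquares, Nat.card_eq_one_iff_exists]
  refine ⟨⟨(0, 0), by norm_num⟩, fun ⟨⟨u, v⟩, h⟩ ↦ ?_⟩
  simp only [Nat.cast_zero] at h
  have hu : u = 0 := by nlinarith [sq_nonneg u, sq_nonneg v]
  have hv : v = 0 := by nlinarith [sq_nonneg u, sq_nonneg v]
  subst hu hv; rfl

theorem hasSum_sumTwoSquares_mul {f : ℕ → ℝ} {A : ℝ}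
    (h : HasSum (fun p : ℤ × ℤ ↦ f (p.1 ^ 2 + p.2 ^ 2).toNat) A) :
    HasSum (fun n ↦ (sumTwoSquares n : ℝ) * f n) A := by
  set g : ℤ × ℤ → ℕ := fun p ↦ (p.1 ^ 2 + p.2 ^ 2).toNat
  have hfiber (n : ℕ) (p : ℤ × ℤ) : p ∈ g ⁻¹' {n} ↔ p.1 ^ 2 + p.2 ^ 2 = n := by
    have : 0 ≤ p.1 ^ 2 + p.2 ^ 2 := by positivity
    simp only [g, mem_preimage, mem_singleton_iff]
    omega
  have hsum_fiber (n : ℕ) :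
      ∑' p : g ⁻¹' {n}, f ((p : ℤ × ℤ).1 ^ 2 + (p : ℤ × ℤ).2 ^ 2).toNat
        = sumTwoSquares n * f n := by
    rw [tsum_congr fun p : g ⁻¹' {n} ↦ congrArg f (show g p = n from p.2), tsum_const,
      nsmul_eq_mul, sumTwoSquares, Nat.card_congr (Equiv.subtypeEquivRight (hfiber n))]
  simpa only [hsum_fiber] using h.tsum_fiberwise g

theorem hasSum_sumTwoSquares_mul_exp {c : ℝ} (hc : 0 < c) :
    HasSum (fun n ↦ (sumTwoSquares n : ℝ) * exp (-c * n))
      ((∑' k : ℤ, exp (-c * k ^ 2)) ^ 2) := by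
  have hθ := summable_exp_neg_mul_int_sq hc
  have hprod := hθ.hasSum.mul hθ.hasSum
    (hθ.mul_of_nonneg hθ (fun _ ↦ (exp_pos _).le) fun _ ↦ (exp_pos _).le)
  rw [← sq] at hprod
  refine hasSum_sumTwoSquares_mul (hprod.congr_fun fun p ↦ ?_)
  have hcast : (((p.1 ^ 2 + p.2 ^ 2).toNat : ℕ) : ℝ) = (p.1 : ℝ) ^ 2 + (p.2 : ℝ) ^ 2 := by
    exact_mod_cast Int.toNat_of_nonneg (by positivity)
  rw [hcast, ← exp_add]
  ring_nf

theorem hasSum_sumTwoSquares_succ_mul_exp {c : ℝ} (hc : 0 < c) :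
    HasSum (fun n : ℕ ↦ (sumTwoSquares (n + 1) : ℝ) * exp (-c * (n + 1)))
      ((∑' k : ℤ, exp (-c * k ^ 2)) ^ 2 - 1) := by
  have h := (hasSum_nat_add_iff' 1).mpr (hasSum_sumTwoSquares_mul_exp hc)
  simpa [sumTwoSquares_zero] using h

theorem tsum_pnat_sumTwoSquares_mul_exp {c : ℝ} (hc : 0 < c) :
    ∑' n : ℕ+, (sumTwoSquares n : ℝ) * exp (-c * n) = (∑' k : ℤ, exp (-c * k ^ 2)) ^ 2 - 1 := by
  rw [tsum_pnat_eq_tsum_succ (f := fun n ↦ (sumTwoSquares n : ℝ) * exp (-c * n)),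
    ← (hasSum_sumTwoSquares_succ_mul_exp hc).tsum_eq]
  push_cast; rfl

theorem sq_tsum_exp_neg_mul_int_sq {s : ℝ} (hs : 0 < s) :
    (∑' k : ℤ, exp (-s * k ^ 2)) ^ 2 = π / s * (∑' k : ℤ, exp (-(π ^ 2 / s) * k ^ 2)) ^ 2 := by
  have h := tsum_exp_neg_mul_int_sq (div_pos hs pi_pos)
  rw [show -π * (s / π) = -s by field_simp, show -π / (s / π) = -(π ^ 2 / s) by field_simp] at h
  rw [h, mul_pow, div_pow, one_pow, ← rpow_natCast, ← rpow_mul (by positivity)]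
  norm_num

/-- The Laplace transform of the circle-problem error term:
`∫_0^∞ e^{-sx} P(x) dx = π s^{-2} ∑_{n≥1} r(n) e^{-π²n/s}` for real `s > 0`. -/
theorem laplace_circleError (s : ℝ) (hs : 0 < s) :
    ∫ x in Set.Ioi (0 : ℝ), Real.exp (-s * x) * circleError x
      = π / s ^ 2 * ∑' n : ℕ+, (sumTwoSquares n : ℝ) * Real.exp (-π ^ 2 * n / s) := by
  have hr_abs : Summable fun n ↦ |(sumTwoSquares n : ℝ)| * exp (-s * n) := by
    simpa only [Nat.abs_cast] using (hasSum_sumTwoSquares_mul_exp hs).summable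
  have hstep := (hasSum_integral_exp_mul_sum_Icc_floor hs hr_abs).unique
    ((hasSum_sumTwoSquares_succ_mul_exp hs).div_const s)
  have hrhs : ∑' n : ℕ+, (sumTwoSquares n : ℝ) * exp (-π ^ 2 * n / s)
      = (∑' k : ℤ, exp (-(π ^ 2 / s) * k ^ 2)) ^ 2 - 1 := by
    rw [← tsum_pnat_sumTwoSquares_mul_exp (by positivity)]
    exact tsum_congr fun n ↦ by ring_nf
  calc ∫ x in Ioi 0, exp (-s * x) * circleError x
      = (∫ x in Ioi 0, exp (-s * x) * ∑ n ∈ Finset.Icc 1 ⌊x⌋₊, (sumTwoSquares n : ℝ))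
          + ∫ x in Ioi 0, exp (-s * x) * (1 - π * x) := by
        rw [← integral_add (integrableOn_exp_mul_sum_Icc_floor hs hr_abs)
          (integrableOn_exp_neg_mul_mul_one_sub_Ioi hs π)]
        refine integral_congr_ae (Eventually.of_forall fun x ↦ ?_)
        simp only [circleError]
        ring
    _ = ((∑' k : ℤ, exp (-s * k ^ 2)) ^ 2 - 1) / s + (1 / s - π / s ^ 2) := by
        rw [hstep, integral_exp_neg_mul_mul_one_sub_Ioi hs]
    _ = π / s ^ 2 * ∑' n : ℕ+, (sumTwoSquares n : ℝ) * exp (-π ^ 2 * n / s) := by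
        rw [hrhs, sq_tsum_exp_neg_mul_int_sq hs]
        field_simp
        ring
end
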